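/- arXiv:2208.03672 — 6 statements merged into one kernel-verified Lean document; each statement's English description precedes it below -/
import Mathlib

section
/- For fixed μ>0, ρ>0, define h(t) = −ρμ ln s(t) + z(t)²/2, where s(t) = (sqrt(t²+4ρμ) − t)/2 and z(t) = (sqrt(t²+4ρμ) + t)/2. Then h is twice continuously differentiable with h'(t) = z(t) and h''(t) = z(t)/(s(t)+z(t)) ∈ (0,1). In particular h is strictly convex and its second derivative is bounded above by 1. -/
/-! With `q = √(t² + 4ρμ)` one has `s + z = q` and `s z = ρμ`, so `s, z > 0`,
`s' = -s/q` and `z' = z/q`. Hence `h' = ρμ/q + z²/q = z(s + z)/q = z`, and `h'' = z/(s + z)`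
lies in `(0, 1)`; strict convexity follows from `h' = z` being strictly increasing. -/

noncomputable def sbal_s (μ ρ t : ℝ) : ℝ := (Real.sqrt (t ^ 2 + 4 * ρ * μ) - t) / 2
noncomputable def sbal_z (μ ρ t : ℝ) : ℝ := (Real.sqrt (t ^ 2 + 4 * ρ * μ) + t) / 2
noncomputable def sbal_h (μ ρ t : ℝ) : ℝ :=
  -(ρ * μ) * Real.log (sbal_s μ ρ t) + (sbal_z μ ρ t) ^ 2 / 2

theorem abs_lt_sqrt_sq_add {c : ℝ} (hc : 0 < c) (t : ℝ) : |t| < Real.sqrt (t ^ 2 + c) :=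
  (Real.lt_sqrt (abs_nonneg t)).2 (by rw [sq_abs]; linarith)

theorem hasDerivAt_sqrt_sq_add {c : ℝ} (hc : 0 < c) (t : ℝ) :
    HasDerivAt (fun t => Real.sqrt (t ^ 2 + c)) (2 * t / (2 * Real.sqrt (t ^ 2 + c))) t := by
  have hsq : HasDerivAt (fun t : ℝ => t ^ 2 + c) (2 * t) t := by
    simpa using (hasDerivAt_pow 2 t).add_const c
  exact hsq.sqrt (by positivity)

section

variable {μ ρ : ℝ}

theorem sbal_s_add_sbal_z (t : ℝ) :
    sbal_s μ ρ t + sbal_z μ ρ t = Real.sqrt (t ^ 2 + 4 * ρ * μ) := by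
  unfold sbal_s sbal_z; ring

theorem sbal_s_mul_sbal_z (hρμ : 0 ≤ ρ * μ) (t : ℝ) : sbal_s μ ρ t * sbal_z μ ρ t = ρ * μ := by
  have hq : Real.sqrt (t ^ 2 + 4 * ρ * μ) ^ 2 = t ^ 2 + 4 * ρ * μ := Real.sq_sqrt (by nlinarith)
  unfold sbal_s sbal_z
  linear_combination hq / 4

theorem sbal_s_pos (hρμ : 0 < ρ * μ) (t : ℝ) : 0 < sbal_s μ ρ t := by
  have := abs_lt_sqrt_sq_add (by linarith : 0 < 4 * ρ * μ) t
  have := le_abs_self t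
  unfold sbal_s; linarith

theorem sbal_z_pos (hρμ : 0 < ρ * μ) (t : ℝ) : 0 < sbal_z μ ρ t := by
  have := abs_lt_sqrt_sq_add (by linarith : 0 < 4 * ρ * μ) t
  have := neg_abs_le t
  unfold sbal_z; linarith

theorem hasDerivAt_sbal_s (hρμ : 0 < ρ * μ) (t : ℝ) :
    HasDerivAt (sbal_s μ ρ) (-sbal_s μ ρ t / (sbal_s μ ρ t + sbal_z μ ρ t)) t := by
  have hq : 0 < Real.sqrt (t ^ 2 + 4 * ρ * μ) := by
    rw [← sbal_s_add_sbal_z]; linarith [sbal_s_pos hρμ t, sbal_z_pos hρμ t]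
  refine (((hasDerivAt_sqrt_sq_add (by linarith : 0 < 4 * ρ * μ) t).sub (hasDerivAt_id t)).div_const 2).congr_deriv ?_
  rw [sbal_s_add_sbal_z, sbal_s]
  field_simp
  ring

theorem hasDerivAt_sbal_z (hρμ : 0 < ρ * μ) (t : ℝ) :
    HasDerivAt (sbal_z μ ρ) (sbal_z μ ρ t / (sbal_s μ ρ t + sbal_z μ ρ t)) t := by
  have hq : 0 < Real.sqrt (t ^ 2 + 4 * ρ * μ) := by
    rw [← sbal_s_add_sbal_z]; linarith [sbal_s_pos hρμ t, sbal_z_pos hρμ t]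
  refine (((hasDerivAt_sqrt_sq_add (by linarith : 0 < 4 * ρ * μ) t).add (hasDerivAt_id t)).div_const 2).congr_deriv ?_
  rw [sbal_s_add_sbal_z, sbal_z]
  field_simp
  ring

theorem hasDerivAt_sbal_h (hρμ : 0 < ρ * μ) (t : ℝ) :
    HasDerivAt (sbal_h μ ρ) (sbal_z μ ρ t) t := by
  have hs := sbal_s_pos hρμ t
  have hz := sbal_z_pos hρμ t
  refine ((((hasDerivAt_sbal_s hρμ t).log hs.ne').const_mul (-(ρ * μ))).add
    (((hasDerivAt_sbal_z hρμ t).pow 2).div_const 2)).congr_deriv ?_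
  rw [← sbal_s_mul_sbal_z hρμ.le t]
  field_simp
  ring

theorem deriv_sbal_h (hρμ : 0 < ρ * μ) : deriv (sbal_h μ ρ) = sbal_z μ ρ :=
  funext fun t => (hasDerivAt_sbal_h hρμ t).deriv

theorem strictMono_sbal_z (hρμ : 0 < ρ * μ) : StrictMono (sbal_z μ ρ) :=
  strictMono_of_hasDerivAt_pos (hasDerivAt_sbal_z hρμ) fun t =>
    div_pos (sbal_z_pos hρμ t) (add_pos (sbal_s_pos hρμ t) (sbal_z_pos hρμ t))

theorem contDiff_sbal_h (hρμ : 0 < ρ * μ) {n : WithTop ℕ∞} : ContDiff ℝ n (sbal_h μ ρ) := by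
  have hq : ContDiff ℝ n fun t : ℝ => Real.sqrt (t ^ 2 + 4 * ρ * μ) :=
    ContDiff.sqrt (by fun_prop) fun t => by nlinarith [sq_nonneg t]
  have hs : ContDiff ℝ n (sbal_s μ ρ) := (hq.sub contDiff_id).div_const 2
  have hz : ContDiff ℝ n (sbal_z μ ρ) := (hq.add contDiff_id).div_const 2
  exact (contDiff_const.mul (hs.log fun t => (sbal_s_pos hρμ t).ne')).add
    ((hz.pow 2).div_const 2)

end

theorem stmt3 (μ ρ : ℝ) (hμ : 0 < μ) (hρ : 0 < ρ) :
    ContDiff ℝ 2 (sbal_h μ ρ) ∧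
    (∀ t : ℝ, HasDerivAt (sbal_h μ ρ) (sbal_z μ ρ t) t) ∧
    (∀ t : ℝ, HasDerivAt (deriv (sbal_h μ ρ))
      (sbal_z μ ρ t / (sbal_s μ ρ t + sbal_z μ ρ t)) t) ∧
    (∀ t : ℝ, sbal_z μ ρ t / (sbal_s μ ρ t + sbal_z μ ρ t) ∈ Set.Ioo (0 : ℝ) 1) ∧
    StrictConvexOn ℝ Set.univ (sbal_h μ ρ) := by
  have hρμ : 0 < ρ * μ := mul_pos hρ hμ
  have hh : ContDiff ℝ 2 (sbal_h μ ρ) := contDiff_sbal_h hρμ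
  refine ⟨hh, hasDerivAt_sbal_h hρμ, ?_, fun t => ?_, ?_⟩
  · rw [deriv_sbal_h hρμ]
    exact hasDerivAt_sbal_z hρμ
  · have hs := sbal_s_pos hρμ t
    have hz := sbal_z_pos hρμ t
    exact ⟨by positivity, (div_lt_one (by positivity)).2 (by linarith)⟩
  · apply StrictMono.strictConvexOn_univ_of_deriv hh.continuous
    rw [deriv_sbal_h hρμ]
    exact strictMono_sbal_z hρμ
end

section
/- Let f : ℝ^m → ℝ be differentiable and convex with M symmetric positive definite satisfying f(u) ≤ f(v) + ∇f(v)^T(u−v) + (1/2)(u−v)^T M (u−v) for all u,v. Then for all u, v ∈ ℝ^m: (∇f(u) − ∇f(v))^T(u−v) ≥ ‖∇f(u) − ∇f(v)‖²_{M^{-1}} (co-coercivity of the gradient in the M^{-1}-norm). -/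
/-!
The gradient inequality of a convex function, evaluated at the point `b - M⁻¹ (∇f(b) - ∇f(u))`
and combined with the majorization around `b`, sharpens itself to
`f u + ∇f(u)ᵀ(b - u) + ½ ‖∇f(b) - ∇f(u)‖²_{M⁻¹} ≤ f b`.
Adding this to the same inequality with `u` and `b` swapped gives co-coercivity.
-/

open Matrix

theorem ConvexOn.le_sub_of_hasDerivAt_lineMap {E : Type*} [AddCommGroup E] [Module ℝ E]
    {f : E → ℝ} (hf : ConvexOn ℝ Set.univ f) {u x : E} {d : ℝ}
    (hd : HasDerivAt (fun τ : ℝ => f (u + τ • (x - u))) d 0) : d ≤ f x - f u := by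
  have hline := hf.comp_affineMap (AffineMap.lineMap u x)
  have hcomp : f ∘ AffineMap.lineMap u x = fun τ : ℝ => f (u + τ • (x - u)) := by
    ext τ
    simp [AffineMap.lineMap_apply, add_comm]
  rw [Set.preimage_univ, hcomp] at hline
  simpa [slope_def_field] using
    hline.le_slope_of_hasDerivAt (Set.mem_univ 0) (Set.mem_univ 1) one_pos hd

theorem add_half_dotProduct_inv_le_of_majorized {m : ℕ} {f : (Fin m → ℝ) → ℝ}
    {g : (Fin m → ℝ) → (Fin m → ℝ)} {M : Matrix (Fin m) (Fin m) ℝ} (hM : IsUnit M.det)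
    (hconv : ConvexOn ℝ Set.univ f)
    (hgrad : ∀ y v : Fin m → ℝ, HasDerivAt (fun τ : ℝ => f (y + τ • v)) (g y ⬝ᵥ v) 0)
    (hmaj : ∀ u v : Fin m → ℝ,
      f u ≤ f v + g v ⬝ᵥ (u - v) + (1 / 2) * ((u - v) ⬝ᵥ (M *ᵥ (u - v))))
    (u b : Fin m → ℝ) :
    f u + g u ⬝ᵥ (b - u) + (1 / 2) * ((g b - g u) ⬝ᵥ (M⁻¹ *ᵥ (g b - g u))) ≤ f b := by
  set w := g b - g u
  set p := M⁻¹ *ᵥ w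
  have hMp : M *ᵥ p = w := by rw [mulVec_mulVec, mul_nonsing_inv M hM, one_mulVec]
  have hgrad_step : g u ⬝ᵥ (b - u) - g u ⬝ᵥ p ≤ f (b - p) - f u := by
    rw [← dotProduct_sub, show b - u - p = b - p - u by abel]
    exact hconv.le_sub_of_hasDerivAt_lineMap (hgrad u _)
  have hmaj_step : f (b - p) ≤ f b - g b ⬝ᵥ p + (1 / 2) * (w ⬝ᵥ p) := by
    have := hmaj (b - p) b
    simpa [mulVec_neg, hMp, dotProduct_comm p w, ← sub_eq_add_neg] using this
  have hw : w ⬝ᵥ p = g b ⬝ᵥ p - g u ⬝ᵥ p := sub_dotProduct _ _ _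
  linarith

theorem stmt8_general {m : ℕ} (f : (Fin m → ℝ) → ℝ) (g : (Fin m → ℝ) → (Fin m → ℝ))
    (M : Matrix (Fin m) (Fin m) ℝ) (hMpd : M.PosDef)
    (hconv : ConvexOn ℝ Set.univ f)
    (hgrad : ∀ y v : Fin m → ℝ, HasDerivAt (fun τ : ℝ => f (y + τ • v)) (g y ⬝ᵥ v) 0)
    (hmaj : ∀ u v : Fin m → ℝ,
      f u ≤ f v + g v ⬝ᵥ (u - v) + (1 / 2) * ((u - v) ⬝ᵥ (M *ᵥ (u - v)))) :
    ∀ u v : Fin m → ℝ,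
      (g u - g v) ⬝ᵥ (M⁻¹ *ᵥ (g u - g v)) ≤ (g u - g v) ⬝ᵥ (u - v) := by
  intro u v
  have hM : IsUnit M.det := (isUnit_iff_isUnit_det M).mp hMpd.isUnit
  have huv := add_half_dotProduct_inv_le_of_majorized hM hconv hgrad hmaj u v
  have hvu := add_half_dotProduct_inv_le_of_majorized hM hconv hgrad hmaj v u
  rw [← neg_sub (g u), mulVec_neg, dotProduct_neg, neg_dotProduct, neg_neg,
    ← neg_sub u, dotProduct_neg] at huv
  rw [sub_dotProduct (g u) (g v) (u - v)]
  linarith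

theorem stmt8 {m : ℕ} (f : (Fin m → ℝ) → ℝ) (g : (Fin m → ℝ) → (Fin m → ℝ))
    (M : Matrix (Fin m) (Fin m) ℝ) (hMsymm : M.IsSymm) (hMpd : M.PosDef)
    (hconv : ConvexOn ℝ Set.univ f)
    (hgrad : ∀ y v : Fin m → ℝ, HasDerivAt (fun τ : ℝ => f (y + τ • v)) (g y ⬝ᵥ v) 0)
    (hmaj : ∀ u v : Fin m → ℝ,
      f u ≤ f v + g v ⬝ᵥ (u - v) + (1 / 2) * ((u - v) ⬝ᵥ (M *ᵥ (u - v)))) :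
    ∀ u v : Fin m → ℝ,
      (g u - g v) ⬝ᵥ (M⁻¹ *ᵥ (g u - g v)) ≤ (g u - g v) ⬝ᵥ (u - v) :=
  stmt8_general f g M hMpd hconv hgrad hmaj
end

section
/- Let f : ℝ^m → ℝ be twice differentiable, M symmetric positive definite, and δ ∈ (0,1) such that δ M ⪯ ∇²f(y) ⪯ M for all y. Then for all u, v: (∇f(u) − ∇f(v))^T(u−v) ≥ (1/(1+δ))‖∇f(u) − ∇f(v)‖²_{M^{-1}} + (δ/(1+δ))‖u−v‖²_M. -/
open Matrix

/-!
Along every line the Hessian bounds `δ M ⪯ ∇²f ⪯ M` give, by the mean value theorem, the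
quadratic bounds `δ/2 ‖w‖²_M ≤ f (x + w) - f x - ⟪∇f x, w⟫ ≤ 1/2 ‖w‖²_M`. Hence
`F = f - δ/2 ‖·‖²_M` is convex and `(1 - δ)`-smooth in the `M`-norm. Comparing `F` at `a` and at
the minimiser of its quadratic upper model gives co-coercivity
`‖∇F u - ∇F v‖²_{M⁻¹} ≤ (1 - δ) ⟪∇F u - ∇F v, u - v⟫`, and substituting `∇F = ∇f - δ M`
yields the claim.
-/

theorem hasDerivAt_along_line {E F : Type*} [AddCommGroup E] [Module ℝ E]
    [NormedAddCommGroup F] [NormedSpace ℝ F] {φ : E → F} {φ' : E → E → F}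
    (h : ∀ y v, HasDerivAt (fun τ : ℝ => φ (y + τ • v)) (φ' y v) 0) (x w : E) (τ₀ : ℝ) :
    HasDerivAt (fun τ : ℝ => φ (x + τ • w)) (φ' (x + τ₀ • w) w) τ₀ := by
  have h₀ := h (x + τ₀ • w) w
  rw [← sub_self τ₀] at h₀
  convert h₀.comp_sub_const τ₀ τ₀ using 1
  ext τ
  congr 1
  module

theorem add_deriv_add_half_le_of_le_deriv2 {h h' h'' : ℝ → ℝ} {K : ℝ}
    (hh : ∀ τ, HasDerivAt h (h' τ) τ) (hh' : ∀ τ, HasDerivAt h' (h'' τ) τ)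
    (hK : ∀ τ, K ≤ h'' τ) : h 0 + h' 0 + K / 2 ≤ h 1 := by
  have hψ : ∀ τ, HasDerivAt (fun τ => h τ - K / 2 * τ ^ 2) (h' τ - K * τ) τ := fun τ =>
    ((hh τ).fun_sub ((hasDerivAt_pow 2 τ).const_mul (K / 2))).congr_deriv (by push_cast; ring)
  have hmono : Monotone fun τ => h' τ - K * τ :=
    monotone_of_hasDerivAt_nonneg (fun τ => (hh' τ).sub ((hasDerivAt_id τ).const_mul K))
      fun τ => by simpa using hK τ
  obtain ⟨c, hc, hslope⟩ := exists_hasDerivAt_eq_slope _ _ zero_lt_one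
    (fun τ _ => (hψ τ).continuousAt.continuousWithinAt) fun τ _ => hψ τ
  have := hmono hc.1.le
  norm_num at hslope this
  linarith

theorem le_add_deriv_add_half_of_deriv2_le {h h' h'' : ℝ → ℝ} {K : ℝ}
    (hh : ∀ τ, HasDerivAt h (h' τ) τ) (hh' : ∀ τ, HasDerivAt h' (h'' τ) τ)
    (hK : ∀ τ, h'' τ ≤ K) : h 1 ≤ h 0 + h' 0 + K / 2 := by
  have := add_deriv_add_half_le_of_le_deriv2 (fun τ => (hh τ).neg) (fun τ => (hh' τ).neg)
    (K := -K) fun τ => neg_le_neg (hK τ)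
  simp only [Pi.neg_apply] at this
  linarith

section Taylor

variable {n : Type*} [Fintype n] {f : (n → ℝ) → ℝ} {g : (n → ℝ) → n → ℝ}
  {Hess : (n → ℝ) → Matrix n n ℝ}

theorem hasDerivAt_dotProduct_along_line
    (hg : ∀ y u, HasDerivAt (fun τ : ℝ => g (y + τ • u)) (Hess y *ᵥ u) 0) (x w : n → ℝ)
    (τ₀ : ℝ) :
    HasDerivAt (fun τ : ℝ => g (x + τ • w) ⬝ᵥ w) (w ⬝ᵥ (Hess (x + τ₀ • w) *ᵥ w)) τ₀ := by
  have hcoord := hasDerivAt_pi.mp (hasDerivAt_along_line hg x w τ₀)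
  rw [dotProduct_comm]
  exact HasDerivAt.fun_sum fun i _ => (hcoord i).mul_const (w i)

theorem add_dotProduct_add_half_le
    (hf : ∀ y v, HasDerivAt (fun τ : ℝ => f (y + τ • v)) (g y ⬝ᵥ v) 0)
    (hg : ∀ y u, HasDerivAt (fun τ : ℝ => g (y + τ • u)) (Hess y *ᵥ u) 0) {x w : n → ℝ} {K : ℝ}
    (hK : ∀ y, K ≤ w ⬝ᵥ (Hess y *ᵥ w)) : f x + g x ⬝ᵥ w + K / 2 ≤ f (x + w) := by
  simpa using add_deriv_add_half_le_of_le_deriv2 (hasDerivAt_along_line hf x w)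
    (hasDerivAt_dotProduct_along_line hg x w) fun τ => hK _

theorem le_add_dotProduct_add_half
    (hf : ∀ y v, HasDerivAt (fun τ : ℝ => f (y + τ • v)) (g y ⬝ᵥ v) 0)
    (hg : ∀ y u, HasDerivAt (fun τ : ℝ => g (y + τ • u)) (Hess y *ᵥ u) 0) {x w : n → ℝ} {K : ℝ}
    (hK : ∀ y, w ⬝ᵥ (Hess y *ᵥ w) ≤ K) : f (x + w) ≤ f x + g x ⬝ᵥ w + K / 2 := by
  simpa using le_add_deriv_add_half_of_deriv2_le (hasDerivAt_along_line hf x w)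
    (hasDerivAt_dotProduct_along_line hg x w) fun τ => hK _

end Taylor

section Symmetric

variable {n : Type*} [Fintype n]

theorem Matrix.IsSymm.dotProduct_mulVec_comm {A : Matrix n n ℝ} (hA : A.IsSymm) (x w : n → ℝ) :
    x ⬝ᵥ (A *ᵥ w) = w ⬝ᵥ (A *ᵥ x) := by
  rw [dotProduct_mulVec, dotProduct_comm, ← mulVec_transpose, hA.eq]

theorem Matrix.IsSymm.add_dotProduct_mulVec_add {A : Matrix n n ℝ} (hA : A.IsSymm)
    (x w : n → ℝ) :
    (x + w) ⬝ᵥ (A *ᵥ (x + w)) = x ⬝ᵥ (A *ᵥ x) + 2 * (w ⬝ᵥ (A *ᵥ x)) + w ⬝ᵥ (A *ᵥ w) := by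
  rw [mulVec_add, dotProduct_add, add_dotProduct, add_dotProduct, hA.dotProduct_mulVec_comm x w]
  ring

end Symmetric

section Cocoercive

variable {n : Type*} [Fintype n] [DecidableEq n] {M : Matrix n n ℝ}

theorem add_dotProduct_sub_add_inv_mulVec_le_of_smooth {F : (n → ℝ) → ℝ} {G : (n → ℝ) → n → ℝ} {L : ℝ}
    (hM : IsUnit M.det) (hL : 0 < L) (hlow : ∀ x w, F x + G x ⬝ᵥ w ≤ F (x + w))
    (hup : ∀ x w, F (x + w) ≤ F x + G x ⬝ᵥ w + L / 2 * (w ⬝ᵥ (M *ᵥ w))) (a b : n → ℝ) :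
    F b + G b ⬝ᵥ (a - b) + 1 / (2 * L) * ((G a - G b) ⬝ᵥ (M⁻¹ *ᵥ (G a - G b))) ≤ F a := by
  set p := G a - G b
  set r := M⁻¹ *ᵥ p
  set s := p ⬝ᵥ r
  -- compare `F` at `a` and at `a - L⁻¹ • r`, where the upper model at `a` of `F - G b ⬝ᵥ ·` is least
  have hz := hlow b (a - L⁻¹ • r - b)
  have ha := hup a (-(L⁻¹ • r))
  rw [add_sub_cancel] at hz
  rw [← sub_eq_add_neg] at ha
  have hMr : M *ᵥ r = p := by
    rw [mulVec_mulVec, mul_nonsing_inv _ hM, one_mulVec]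
  have hquad : -(L⁻¹ • r) ⬝ᵥ (M *ᵥ -(L⁻¹ • r)) = L⁻¹ ^ 2 * s := by
    rw [mulVec_neg, mulVec_smul, hMr, neg_dotProduct, dotProduct_neg, neg_neg, smul_dotProduct,
      dotProduct_smul, dotProduct_comm, smul_eq_mul, smul_eq_mul]
    ring
  have hlin : G b ⬝ᵥ (a - L⁻¹ • r - b) = G b ⬝ᵥ (a - b) + G a ⬝ᵥ (-(L⁻¹ • r)) + L⁻¹ * s := by
    simp only [s, p, dotProduct_sub, dotProduct_neg, dotProduct_smul, sub_dotProduct, smul_eq_mul]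
    ring
  rw [hquad] at ha
  rw [hlin] at hz
  have : L⁻¹ * s - L / 2 * (L⁻¹ ^ 2 * s) = 1 / (2 * L) * s := by field_simp; ring
  linarith

theorem cocoercive_of_convex_of_smooth {F : (n → ℝ) → ℝ} {G : (n → ℝ) → n → ℝ} {L : ℝ}
    (hM : IsUnit M.det) (hL : 0 < L) (hlow : ∀ x w, F x + G x ⬝ᵥ w ≤ F (x + w))
    (hup : ∀ x w, F (x + w) ≤ F x + G x ⬝ᵥ w + L / 2 * (w ⬝ᵥ (M *ᵥ w))) (u v : n → ℝ) :
    (G u - G v) ⬝ᵥ (M⁻¹ *ᵥ (G u - G v)) ≤ L * ((G u - G v) ⬝ᵥ (u - v)) := by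
  have huv := add_dotProduct_sub_add_inv_mulVec_le_of_smooth hM hL hlow hup u v
  have hvu := add_dotProduct_sub_add_inv_mulVec_le_of_smooth hM hL hlow hup v u
  rw [← neg_sub (G u), mulVec_neg, neg_dotProduct, dotProduct_neg, neg_neg, ← neg_sub u,
    dotProduct_neg] at hvu
  rw [← div_le_iff₀' hL]
  have hsplit := sub_dotProduct (G u) (G v) (u - v)
  have : 1 / (2 * L) * ((G u - G v) ⬝ᵥ (M⁻¹ *ᵥ (G u - G v))) =
      (G u - G v) ⬝ᵥ (M⁻¹ *ᵥ (G u - G v)) / L / 2 := by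
    field_simp
  linarith

theorem cocoercive_of_stronglyConvex_of_smooth {f : (n → ℝ) → ℝ} {g : (n → ℝ) → n → ℝ}
    {μ L : ℝ} (hMsymm : M.IsSymm) (hM : IsUnit M.det) (hμL : μ < L)
    (hlow : ∀ x w, f x + g x ⬝ᵥ w + μ * (w ⬝ᵥ (M *ᵥ w)) / 2 ≤ f (x + w))
    (hup : ∀ x w, f (x + w) ≤ f x + g x ⬝ᵥ w + L * (w ⬝ᵥ (M *ᵥ w)) / 2) (u v : n → ℝ) :
    (g u - g v) ⬝ᵥ (M⁻¹ *ᵥ (g u - g v)) + μ * L * ((u - v) ⬝ᵥ (M *ᵥ (u - v)))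
      ≤ (μ + L) * ((g u - g v) ⬝ᵥ (u - v)) := by
  set F := fun x => f x - μ / 2 * (x ⬝ᵥ (M *ᵥ x))
  set G := fun x => g x - μ • (M *ᵥ x)
  have hGdot (x w : n → ℝ) : G x ⬝ᵥ w = g x ⬝ᵥ w - μ * (w ⬝ᵥ (M *ᵥ x)) := by
    rw [sub_dotProduct, smul_dotProduct, smul_eq_mul, dotProduct_comm (M *ᵥ x)]
  have hcoco := cocoercive_of_convex_of_smooth (F := F) (G := G) hM (sub_pos.2 hμL)
    (fun x w => by
      simp only [F, hGdot, hMsymm.add_dotProduct_mulVec_add]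
      linarith [hlow x w])
    (fun x w => by
      simp only [F, hGdot, hMsymm.add_dotProduct_mulVec_add]
      linarith [hup x w]) u v
  set a := u - v
  set d := g u - g v
  have hGuv : G u - G v = d - μ • (M *ᵥ a) := by
    simp only [G, d, a, mulVec_sub, smul_sub]
    abel
  have hinv : M⁻¹ *ᵥ (d - μ • (M *ᵥ a)) = M⁻¹ *ᵥ d - μ • a := by
    rw [mulVec_sub, mulVec_smul, mulVec_mulVec, nonsing_inv_mul _ hM, one_mulVec]
  have hcross : (M *ᵥ a) ⬝ᵥ (M⁻¹ *ᵥ d) = d ⬝ᵥ a := by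
    rw [dotProduct_comm, hMsymm.dotProduct_mulVec_comm, mulVec_mulVec, mul_nonsing_inv _ hM,
      one_mulVec, dotProduct_comm]
  rw [hGuv, hinv] at hcoco
  simp only [sub_dotProduct, dotProduct_sub, smul_dotProduct, dotProduct_smul, smul_eq_mul,
    hcross, dotProduct_comm (M *ᵥ a) a] at hcoco
  linarith

end Cocoercive

theorem stmt9 {m : ℕ} (f : (Fin m → ℝ) → ℝ) (g : (Fin m → ℝ) → (Fin m → ℝ))
    (Hess : (Fin m → ℝ) → Matrix (Fin m) (Fin m) ℝ)
    (M : Matrix (Fin m) (Fin m) ℝ) (hMsymm : M.IsSymm) (hMpd : M.PosDef)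
    (δ : ℝ) (hδ : δ ∈ Set.Ioo (0 : ℝ) 1)
    (hgrad : ∀ y v : Fin m → ℝ, HasDerivAt (fun τ : ℝ => f (y + τ • v)) (g y ⬝ᵥ v) 0)
    (hhess : ∀ y u : Fin m → ℝ,
      HasDerivAt (fun τ : ℝ => g (y + τ • u)) (Hess y *ᵥ u) 0)
    (hlower : ∀ y w : Fin m → ℝ, δ * (w ⬝ᵥ (M *ᵥ w)) ≤ w ⬝ᵥ (Hess y *ᵥ w))
    (hupper : ∀ y w : Fin m → ℝ, w ⬝ᵥ (Hess y *ᵥ w) ≤ w ⬝ᵥ (M *ᵥ w)) :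
    ∀ u v : Fin m → ℝ,
      (1 / (1 + δ)) * ((g u - g v) ⬝ᵥ (M⁻¹ *ᵥ (g u - g v)))
        + (δ / (1 + δ)) * ((u - v) ⬝ᵥ (M *ᵥ (u - v)))
      ≤ (g u - g v) ⬝ᵥ (u - v) := by
  intro u v
  obtain ⟨hδ₀, hδ₁⟩ := hδ
  have hM : IsUnit M.det := (isUnit_iff_isUnit_det M).mp hMpd.isUnit
  have hcoco := cocoercive_of_stronglyConvex_of_smooth hMsymm hM hδ₁
    (fun x w => add_dotProduct_add_half_le hgrad hhess fun y => hlower y w)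
    (fun x w => le_add_dotProduct_add_half hgrad hhess fun y => (hupper y w).trans_eq
      (one_mul _).symm) u v
  rw [div_mul_eq_mul_div, div_mul_eq_mul_div, ← add_div, div_le_iff₀ (by linarith)]
  linarith
end

section
/- Let f : ℝ^m → ℝ be twice differentiable with δ M ⪯ ∇²f(y) ⪯ M for all y, where M is symmetric positive definite and δ ∈ (0,1), and let y* be the minimizer of f. Then the iteration y_{ℓ+1} = y_ℓ − M^{-1}∇f(y_ℓ) satisfies ‖y_{ℓ+1} − y*‖²_M ≤ ((1−δ)/(1+δ))‖y_ℓ − y*‖²_M, hence ‖y_ℓ − y*‖²_M ≤ ((1−δ)/(1+δ))^ℓ ‖y_0 − y*‖²_M (global linear convergence). -/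
/-! In the inner product `⟨u, v⟩ = uᵀ M v` the iteration is a gradient step of length one for the
gradient `M⁻¹ g`, and the Hessian bounds make `f` `δ`-strongly convex and `1`-smooth. Co-coercivity
of the gradient of the convex, `(1 - δ)`-smooth function `f - δ/2 ‖·‖²` gives, for `e = y - y*`,
`δ ‖e‖² + ‖M⁻¹ g y‖² ≤ (1 + δ) ⟨M⁻¹ g y, e⟩`, which is the one-step contraction after expanding
`‖e - M⁻¹ g y‖²`. The convexity and smoothness bounds themselves come from the one-variable
second-order Taylor bounds along lines. -/

open Matrix

lemma ConvexOn.add_mul_sub_le_of_hasDerivAt {f : ℝ → ℝ} {f' x : ℝ} (hf : ConvexOn ℝ Set.univ f)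
    (hx : HasDerivAt f f' x) (y : ℝ) : f x + f' * (y - x) ≤ f y := by
  rcases lt_trichotomy x y with hxy | rfl | hyx
  · have := hf.le_slope_of_hasDerivAt trivial trivial hxy hx
    rw [slope_def_field, le_div_iff₀ (sub_pos.2 hxy)] at this
    linarith
  · simp
  · have := hf.slope_le_of_hasDerivAt trivial trivial hyx hx
    rw [slope_def_field, div_le_iff₀ (sub_pos.2 hyx)] at this
    linarith

section Taylor

variable {F G D : ℝ → ℝ} (hF : ∀ t, HasDerivAt F (G t) t) (hG : ∀ t, HasDerivAt G (D t) t)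
include hF hG

lemma le_taylor_of_deriv2_le {a : ℝ} (hD : ∀ t, D t ≤ a) (x y : ℝ) :
    F y ≤ F x + G x * (y - x) + a / 2 * (y - x) ^ 2 := by
  have hψ : ∀ t, HasDerivAt (fun t => a / 2 * t ^ 2 - F t) (a * t - G t) t := fun t => by
    refine (((hasDerivAt_pow 2 t).const_mul (a / 2)).fun_sub (hF t)).congr_deriv ?_
    norm_num
    ring
  have hψ' : ∀ t, HasDerivAt (fun t => a * t - G t) (a - D t) t := fun t => by
    simpa using ((hasDerivAt_id t).const_mul a).fun_sub (hG t)
  have hconv : ConvexOn ℝ Set.univ (fun t => a / 2 * t ^ 2 - F t) :=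
    convexOn_of_hasDerivWithinAt2_nonneg convex_univ
      (fun t _ => (hψ t).continuousAt.continuousWithinAt)
      (fun t _ => (hψ t).hasDerivWithinAt) (fun t _ => (hψ' t).hasDerivWithinAt)
      (fun t _ => sub_nonneg.2 (hD t))
  have := hconv.add_mul_sub_le_of_hasDerivAt (hψ x) y
  linear_combination this

lemma taylor_le_of_le_deriv2 {b : ℝ} (hD : ∀ t, b ≤ D t) (x y : ℝ) :
    F x + G x * (y - x) + b / 2 * (y - x) ^ 2 ≤ F y := by
  have := le_taylor_of_deriv2_le (fun t => (hF t).fun_neg) (fun t => (hG t).fun_neg)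
    (a := -b) (fun t => neg_le_neg (hD t)) x y
  linear_combination this

end Taylor

lemma hasDerivAt_line_of_forall_hasDerivAt_zero {E F : Type*} [AddCommGroup E] [Module ℝ E]
    [NormedAddCommGroup F] [NormedSpace ℝ F] {φ : E → F} {φ' : E → E → F}
    (h : ∀ y v, HasDerivAt (fun τ : ℝ => φ (y + τ • v)) (φ' y v) 0) (x v : E) (t : ℝ) :
    HasDerivAt (fun τ : ℝ => φ (x + τ • v)) (φ' (x + t • v) v) t := by
  have := HasDerivAt.comp_sub_const t t (by rw [sub_self]; exact h (x + t • v) v)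
  convert this using 2 with τ
  rw [add_assoc, ← add_smul, add_sub_cancel]

lemma HasDerivAt.dotProduct_const {n : Type*} [Fintype n] {u : ℝ → n → ℝ} {u' : n → ℝ} {t : ℝ}
    (hu : HasDerivAt u u' t) (w : n → ℝ) : HasDerivAt (fun τ => u τ ⬝ᵥ w) (u' ⬝ᵥ w) t :=
  HasDerivAt.fun_sum fun i _ => (hasDerivAt_pi.1 hu i).mul_const (w i)

section SmoothConvex

variable {V : Type*} [AddCommGroup V] [Module ℝ V] (B : LinearMap.BilinForm ℝ V)
  {φ : V → ℝ} {G : V → V}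

lemma add_bilin_grad_add_le_of_smooth_convex {L : ℝ} (hL : 0 < L)
    (hlow : ∀ x w, φ x + B (G x) w ≤ φ (x + w))
    (hup : ∀ x w, φ (x + w) ≤ φ x + B (G x) w + L / 2 * B w w) (x z : V) :
    φ x + B (G x) (z - x) + B (G z - G x) (G z - G x) / (2 * L) ≤ φ z := by
  set d := G z - G x
  set e := z - x
  -- compare both sides with φ at the point reached from z by a gradient step
  have h₁ := hlow x (e - L⁻¹ • d)
  have h₂ := hup z (-(L⁻¹ • d))
  rw [show x + (e - L⁻¹ • d) = z + -(L⁻¹ • d) by simp only [e]; abel] at h₁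
  simp only [map_sub, map_neg, map_smul, LinearMap.neg_apply, LinearMap.smul_apply,
    smul_eq_mul] at h₁ h₂
  have hd : B (G z) d - B (G x) d = B d d := by rw [← LinearMap.sub_apply, ← map_sub]
  have hL' : L * L⁻¹ = 1 := mul_inv_cancel₀ hL.ne'
  linear_combination h₁ + h₂ - L⁻¹ * hd + (L⁻¹ * B d d / 2) * hL'

lemma cocoercive_of_smooth_convex {L : ℝ} (hL : 0 < L)
    (hlow : ∀ x w, φ x + B (G x) w ≤ φ (x + w))
    (hup : ∀ x w, φ (x + w) ≤ φ x + B (G x) w + L / 2 * B w w) (x z : V) :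
    B (G z - G x) (G z - G x) ≤ L * B (G z - G x) (z - x) := by
  have h₁ := add_bilin_grad_add_le_of_smooth_convex B hL hlow hup x z
  have h₂ := add_bilin_grad_add_le_of_smooth_convex B hL hlow hup z x
  rw [← neg_sub (G z), ← neg_sub z x] at h₂
  simp only [map_neg, LinearMap.neg_apply, neg_neg] at h₂
  have hd : B (G z - G x) (z - x) = B (G z) (z - x) - B (G x) (z - x) := by
    rw [LinearMap.map_sub₂]
  have hL' : L * L⁻¹ = 1 := mul_inv_cancel₀ hL.ne'
  linear_combination L * (h₁ + h₂) - L * hd - B (G z - G x) (G z - G x) * hL'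

lemma cocoercive_of_strongly_convex_smooth (hB : B.IsSymm) {μ L : ℝ} (hμL : μ < L)
    (hlow : ∀ x w, φ x + B (G x) w + μ / 2 * B w w ≤ φ (x + w))
    (hup : ∀ x w, φ (x + w) ≤ φ x + B (G x) w + L / 2 * B w w) (x z : V) :
    μ * L * B (z - x) (z - x) + B (G z - G x) (G z - G x) ≤
      (μ + L) * B (G z - G x) (z - x) := by
  have hsq : ∀ x w, B (x + w) (x + w) = B x x + 2 * B x w + B w w := fun x w => by
    rw [map_add, LinearMap.map_add₂, LinearMap.map_add₂, hB.eq w x]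
    ring
  have hgrad : ∀ x w, B (G x - μ • x) w = B (G x) w - μ * B x w := fun x w => by
    rw [LinearMap.map_sub₂, LinearMap.map_smul₂, smul_eq_mul]
  -- subtracting μ/2 ‖·‖² leaves a convex, (L - μ)-smooth function
  have key := cocoercive_of_smooth_convex B (sub_pos.2 hμL)
    (φ := fun v => φ v - μ / 2 * B v v) (G := fun v => G v - μ • v)
    (fun x w => by linear_combination hlow x w + μ / 2 * hsq x w + hgrad x w)
    (fun x w => by linear_combination hup x w - μ / 2 * hsq x w - hgrad x w) x z
  rw [show G z - μ • z - (G x - μ • x) = (G z - G x) - μ • (z - x) by rw [smul_sub]; abel] at key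
  set d := G z - G x
  set e := z - x
  simp only [map_sub, map_smul, LinearMap.sub_apply, LinearMap.smul_apply, smul_eq_mul,
    hB.eq e d] at key
  linear_combination key

lemma bilin_sub_grad_le_of_strongly_convex_smooth (hB : B.IsSymm) (hB₀ : ∀ v, 0 ≤ B v v)
    {μ : ℝ} (hμ₀ : 0 ≤ μ) (hμ₁ : μ < 1)
    (hlow : ∀ x w, φ x + B (G x) w + μ / 2 * B w w ≤ φ (x + w))
    (hup : ∀ x w, φ (x + w) ≤ φ x + B (G x) w + 1 / 2 * B w w)
    {xstar : V} (hstar : G xstar = 0) (x : V) :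
    B (x - G x - xstar) (x - G x - xstar) ≤ (1 - μ) / (1 + μ) * B (x - xstar) (x - xstar) := by
  have h := cocoercive_of_strongly_convex_smooth B hB hμ₁ hlow hup xstar x
  rw [hstar, sub_zero] at h
  rw [show x - G x - xstar = (x - xstar) - G x by abel]
  set e := x - xstar
  simp only [map_sub, LinearMap.sub_apply, hB.eq e (G x)]
  rw [div_mul_eq_mul_div, le_div_iff₀ (by linarith)]
  nlinarith [mul_nonneg (sub_nonneg.2 hμ₁.le) (hB₀ (G x))]

end SmoothConvex

section LineDerivatives

variable {n : Type*} [Fintype n] {f : (n → ℝ) → ℝ} {g : (n → ℝ) → n → ℝ}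
  {H : (n → ℝ) → Matrix n n ℝ}
  (hgrad : ∀ y v, HasDerivAt (fun τ : ℝ => f (y + τ • v)) (g y ⬝ᵥ v) 0)
  (hhess : ∀ y u, HasDerivAt (fun τ : ℝ => g (y + τ • u)) (H y *ᵥ u) 0)
include hgrad hhess

lemma apply_add_le_of_hessian_le {x w : n → ℝ} {c : ℝ}
    (hc : ∀ t : ℝ, w ⬝ᵥ (H (x + t • w) *ᵥ w) ≤ c) :
    f (x + w) ≤ f x + g x ⬝ᵥ w + c / 2 := by
  simpa using le_taylor_of_deriv2_le (hasDerivAt_line_of_forall_hasDerivAt_zero hgrad x w)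
    (fun t => (hasDerivAt_line_of_forall_hasDerivAt_zero hhess x w t).dotProduct_const w)
    (fun t => (dotProduct_comm _ _).trans_le (hc t)) 0 1

lemma le_apply_add_of_le_hessian {x w : n → ℝ} {c : ℝ}
    (hc : ∀ t : ℝ, c ≤ w ⬝ᵥ (H (x + t • w) *ᵥ w)) :
    f x + g x ⬝ᵥ w + c / 2 ≤ f (x + w) := by
  simpa using taylor_le_of_le_deriv2 (hasDerivAt_line_of_forall_hasDerivAt_zero hgrad x w)
    (fun t => (hasDerivAt_line_of_forall_hasDerivAt_zero hhess x w t).dotProduct_const w)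
    (fun t => (hc t).trans_eq (dotProduct_comm _ _)) 0 1

end LineDerivatives

lemma eq_zero_of_forall_le_of_hasDerivAt_line {n : Type*} [Fintype n] {f : (n → ℝ) → ℝ}
    {y g : n → ℝ} (hgrad : ∀ v, HasDerivAt (fun τ : ℝ => f (y + τ • v)) (g ⬝ᵥ v) 0)
    (hmin : ∀ w, f y ≤ f w) : g = 0 :=
  dotProduct_self_eq_zero.1 <| IsLocalMin.hasDerivAt_eq_zero
    (Filter.Eventually.of_forall fun τ => by simpa using hmin (y + τ • g)) (hgrad g)

lemma Matrix.toBilin'_inv_mulVec {n R : Type*} [Fintype n] [DecidableEq n] [CommRing R]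
    {M : Matrix n n R} (hM : M.IsSymm) (hdet : IsUnit M.det) (v w : n → R) :
    M.toBilin' (M⁻¹ *ᵥ v) w = v ⬝ᵥ w := by
  rw [toBilin'_apply', dotProduct_mulVec, ← mulVec_transpose, hM.eq, mulVec_mulVec,
    mul_nonsing_inv _ hdet, one_mulVec]

theorem stmt10_general {m : ℕ} (f : (Fin m → ℝ) → ℝ) (g : (Fin m → ℝ) → (Fin m → ℝ))
    (Hess : (Fin m → ℝ) → Matrix (Fin m) (Fin m) ℝ)
    (M : Matrix (Fin m) (Fin m) ℝ) (hMpd : M.PosDef)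
    (δ : ℝ) (hδ : δ ∈ Set.Ioo (0 : ℝ) 1)
    (hgrad : ∀ y v : Fin m → ℝ, HasDerivAt (fun τ : ℝ => f (y + τ • v)) (g y ⬝ᵥ v) 0)
    (hhess : ∀ y u : Fin m → ℝ,
      HasDerivAt (fun τ : ℝ => g (y + τ • u)) (Hess y *ᵥ u) 0)
    (hlower : ∀ y w : Fin m → ℝ, δ * (w ⬝ᵥ (M *ᵥ w)) ≤ w ⬝ᵥ (Hess y *ᵥ w))
    (hupper : ∀ y w : Fin m → ℝ, w ⬝ᵥ (Hess y *ᵥ w) ≤ w ⬝ᵥ (M *ᵥ w))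
    (ystar : Fin m → ℝ) (hmin : ∀ w, f ystar ≤ f w)
    (y : ℕ → (Fin m → ℝ)) (hiter : ∀ ℓ : ℕ, y (ℓ + 1) = y ℓ - M⁻¹ *ᵥ g (y ℓ)) :
    (∀ ℓ : ℕ,
      (y (ℓ + 1) - ystar) ⬝ᵥ (M *ᵥ (y (ℓ + 1) - ystar))
        ≤ ((1 - δ) / (1 + δ)) * ((y ℓ - ystar) ⬝ᵥ (M *ᵥ (y ℓ - ystar)))) ∧
    (∀ ℓ : ℕ,
      (y ℓ - ystar) ⬝ᵥ (M *ᵥ (y ℓ - ystar))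
        ≤ ((1 - δ) / (1 + δ)) ^ ℓ * ((y 0 - ystar) ⬝ᵥ (M *ᵥ (y 0 - ystar)))) := by
  obtain ⟨hδ₀, hδ₁⟩ := hδ
  have hsymm : M.IsSymm := isHermitian_iff_isSymm.1 hMpd.isHermitian
  have hB : ∀ v, M.toBilin' v v = v ⬝ᵥ (M *ᵥ v) := fun v => M.toBilin'_apply' v v
  have hBG : ∀ x w, M.toBilin' (M⁻¹ *ᵥ g x) w = g x ⬝ᵥ w :=
    fun x w => toBilin'_inv_mulVec hsymm ((M.isUnit_iff_isUnit_det).1 hMpd.isUnit) (g x) w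
  have hlow : ∀ x w, f x + M.toBilin' (M⁻¹ *ᵥ g x) w + δ / 2 * M.toBilin' w w ≤ f (x + w) :=
    fun x w => by
      rw [hBG, hB]
      linear_combination
        le_apply_add_of_le_hessian hgrad hhess fun t => hlower (x + t • w) w
  have hup : ∀ x w, f (x + w) ≤ f x + M.toBilin' (M⁻¹ *ᵥ g x) w + 1 / 2 * M.toBilin' w w :=
    fun x w => by
      rw [hBG, hB]
      linear_combination
        apply_add_le_of_hessian_le hgrad hhess fun t => hupper (x + t • w) w
  have hstar : M⁻¹ *ᵥ g ystar = 0 := by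
    rw [eq_zero_of_forall_le_of_hasDerivAt_line (hgrad ystar) hmin, mulVec_zero]
  have hstep : ∀ ℓ, (y (ℓ + 1) - ystar) ⬝ᵥ (M *ᵥ (y (ℓ + 1) - ystar))
      ≤ ((1 - δ) / (1 + δ)) * ((y ℓ - ystar) ⬝ᵥ (M *ᵥ (y ℓ - ystar))) := fun ℓ => by
    rw [hiter, ← hB, ← hB]
    exact bilin_sub_grad_le_of_strongly_convex_smooth _ (isSymm_toBilin'_iff_isSymm.2 hsymm)
      (fun v => by simpa [hB] using hMpd.posSemidef.dotProduct_mulVec_nonneg v) hδ₀.le hδ₁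
      hlow hup hstar (y ℓ)
  have hρ : 0 ≤ (1 - δ) / (1 + δ) := div_nonneg (by linarith) (by linarith)
  exact ⟨hstep, fun ℓ => le_geom (u := fun k => (y k - ystar) ⬝ᵥ (M *ᵥ (y k - ystar))) hρ ℓ
    fun k _ => hstep k⟩

theorem stmt10 {m : ℕ} (f : (Fin m → ℝ) → ℝ) (g : (Fin m → ℝ) → (Fin m → ℝ))
    (Hess : (Fin m → ℝ) → Matrix (Fin m) (Fin m) ℝ)
    (M : Matrix (Fin m) (Fin m) ℝ) (hMsymm : M.IsSymm) (hMpd : M.PosDef)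
    (δ : ℝ) (hδ : δ ∈ Set.Ioo (0 : ℝ) 1)
    (hgrad : ∀ y v : Fin m → ℝ, HasDerivAt (fun τ : ℝ => f (y + τ • v)) (g y ⬝ᵥ v) 0)
    (hhess : ∀ y u : Fin m → ℝ,
      HasDerivAt (fun τ : ℝ => g (y + τ • u)) (Hess y *ᵥ u) 0)
    (hlower : ∀ y w : Fin m → ℝ, δ * (w ⬝ᵥ (M *ᵥ w)) ≤ w ⬝ᵥ (Hess y *ᵥ w))
    (hupper : ∀ y w : Fin m → ℝ, w ⬝ᵥ (Hess y *ᵥ w) ≤ w ⬝ᵥ (M *ᵥ w))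
    (ystar : Fin m → ℝ) (hmin : ∀ w, f ystar ≤ f w)
    (y : ℕ → (Fin m → ℝ)) (hiter : ∀ ℓ : ℕ, y (ℓ + 1) = y ℓ - M⁻¹ *ᵥ g (y ℓ)) :
    (∀ ℓ : ℕ,
      (y (ℓ + 1) - ystar) ⬝ᵥ (M *ᵥ (y (ℓ + 1) - ystar))
        ≤ ((1 - δ) / (1 + δ)) * ((y ℓ - ystar) ⬝ᵥ (M *ᵥ (y ℓ - ystar)))) ∧
    (∀ ℓ : ℕ,
      (y ℓ - ystar) ⬝ᵥ (M *ᵥ (y ℓ - ystar))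
        ≤ ((1 - δ) / (1 + δ)) ^ ℓ * ((y 0 - ystar) ⬝ᵥ (M *ᵥ (y 0 - ystar)))) :=
  stmt10_general f g Hess M hMpd δ hδ hgrad hhess hlower hupper ystar hmin y hiter
end

section
/- Fix μ>0, ρ>0, a ∈ ℝ^m (a column of A), c_i ∈ ℝ. Suppose y* ∈ ℝ^m and x_i* ≥ 0 satisfy complementarity x_i*(c_i − a^T y*) = 0 with c_i − a^T y* ≥ 0. Let t* = ρ x_i* − c_i + a^T y* and z_i* = (sqrt((t*)² + 4ρμ) + t*)/2. Then ρ x_i* ≤ z_i* ≤ ρ x_i* + sqrt(ρμ). -/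
/-! The point `z* = z(t*)` is the value at `t*` of the smoothed positive part
`z_c(t) = (√(t² + 4c) + t) / 2`, `c = ρμ`, which satisfies `t⁺ ≤ z_c(t) ≤ t⁺ + √c` because
`|t| ≤ √(t² + 4c) ≤ |t| + 2√c`. Complementarity makes `t* = ρx* - s` with `ρx*, s ≥ 0` and
`ρx* · s = 0`, hence `(t*)⁺ = ρx*`. -/

open Matrix

noncomputable def smoothPosPart (c t : ℝ) : ℝ := (√(t ^ 2 + 4 * c) + t) / 2

section smoothPosPart

variable {c : ℝ} (t : ℝ)

theorem max_zero_le_smoothPosPart (hc : 0 ≤ c) : max t 0 ≤ smoothPosPart c t := by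
  have : |t| ≤ √(t ^ 2 + 4 * c) := Real.abs_le_sqrt (by linarith)
  unfold smoothPosPart
  rcases le_total 0 t with ht | ht
  · rw [abs_of_nonneg ht] at this; rw [max_eq_left ht]; linarith
  · rw [abs_of_nonpos ht] at this; rw [max_eq_right ht]; linarith

theorem smoothPosPart_le_max_zero_add_sqrt (hc : 0 ≤ c) :
    smoothPosPart c t ≤ max t 0 + √c := by
  have hsqrt : √(t ^ 2 + 4 * c) ≤ |t| + 2 * √c := by
    rw [Real.sqrt_le_left (by positivity)]
    nlinarith [sq_abs t, Real.sq_sqrt hc, abs_nonneg t, Real.sqrt_nonneg c]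
  unfold smoothPosPart
  rcases le_total 0 t with ht | ht
  · rw [abs_of_nonneg ht] at hsqrt; rw [max_eq_left ht]; linarith
  · rw [abs_of_nonpos ht] at hsqrt; rw [max_eq_right ht]; linarith

end smoothPosPart

theorem max_sub_zero_eq_of_mul_eq_zero {p s : ℝ} (hp : 0 ≤ p) (hs : 0 ≤ s) (hps : p * s = 0) :
    max (p - s) 0 = p := by
  rcases mul_eq_zero.mp hps with rfl | rfl
  · simpa using hs
  · simpa using hp

theorem stmt11 {m : ℕ} (μ ρ : ℝ) (hμ : 0 < μ) (hρ : 0 < ρ)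
    (a ystar : Fin m → ℝ) (ci xi : ℝ) (hxi : 0 ≤ xi)
    (hfeas : 0 ≤ ci - a ⬝ᵥ ystar) (hcomp : xi * (ci - a ⬝ᵥ ystar) = 0) :
    ρ * xi ≤ (Real.sqrt ((ρ * xi - ci + a ⬝ᵥ ystar) ^ 2 + 4 * ρ * μ)
        + (ρ * xi - ci + a ⬝ᵥ ystar)) / 2 ∧
    (Real.sqrt ((ρ * xi - ci + a ⬝ᵥ ystar) ^ 2 + 4 * ρ * μ)
        + (ρ * xi - ci + a ⬝ᵥ ystar)) / 2 ≤ ρ * xi + Real.sqrt (ρ * μ) := by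
  set t := ρ * xi - ci + a ⬝ᵥ ystar
  have hc : 0 ≤ ρ * μ := by positivity
  have ht : t = ρ * xi - (ci - a ⬝ᵥ ystar) := by ring
  have hpos : max t 0 = ρ * xi := by
    rw [ht]
    exact max_sub_zero_eq_of_mul_eq_zero (by positivity) hfeas (by rw [mul_assoc, hcomp, mul_zero])
  have hz : smoothPosPart (ρ * μ) t = (√(t ^ 2 + 4 * ρ * μ) + t) / 2 := by
    rw [smoothPosPart, mul_assoc]
  rw [← hz, ← hpos]
  exact ⟨max_zero_le_smoothPosPart t hc, smoothPosPart_le_max_zero_add_sqrt t hc⟩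
end

section
/- Fix μ > 0, x_i ∈ ℝ, c_i − a^T y ∈ ℝ. Define for ρ > 0: r(ρ) = s(ρ) − (c_i − a^T y) where s(ρ) = (sqrt((ρ x_i − c_i + a^T y)² + 4ρμ) − (ρ x_i − c_i + a^T y))/2. Then ∂(r(ρ)²)/∂ρ = (2/ρ)·(s/(s+z))·r(ρ)², where z(ρ) = (sqrt((ρx_i − c_i + a^Ty)² + 4ρμ) + (ρx_i − c_i + a^Ty))/2; in particular if r(ρ) ≠ 0 then r(ρ)² is strictly increasing in ρ, so the squared constraint residual decreases as ρ decreases. -/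
/-!
Write `q = √(t² + 4ρμ)`. Then `s` is the positive root of `X² + tX - ρμ`, and `s + z = 2s + t = q`.
Differentiating `s (s + t) = ρμ` gives `s' = (μ - xᵢ s) / q`, and the same identity turns
`ρ (μ - xᵢ s)` into `s (s - w) = s r`. Hence `(r²)' = 2 r s' = (2/ρ) (s/q) r²`, which is positive
wherever `r ≠ 0`.
-/

noncomputable def posRoot (t b : ℝ) : ℝ := (√(t ^ 2 + 4 * b) - t) / 2

section posRoot

variable {t b : ℝ}

lemma posRoot_pos (hb : 0 < b) : 0 < posRoot t b := by
  have hlt : √(t ^ 2) < √(t ^ 2 + 4 * b) := Real.sqrt_lt_sqrt (sq_nonneg t) (by linarith)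
  rw [Real.sqrt_sq_eq_abs] at hlt
  unfold posRoot
  linarith [le_abs_self t]

lemma posRoot_mul_add_self (hb : 0 ≤ b) : posRoot t b * (posRoot t b + t) = b := by
  have hq : √(t ^ 2 + 4 * b) ^ 2 = t ^ 2 + 4 * b := Real.sq_sqrt (by positivity)
  unfold posRoot
  linear_combination hq / 4

lemma two_mul_posRoot_add (t b : ℝ) : 2 * posRoot t b + t = √(t ^ 2 + 4 * b) := by
  unfold posRoot
  ring

lemma HasDerivAt.posRoot {f g : ℝ → ℝ} {f' g' x : ℝ} (hf : HasDerivAt f f' x)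
    (hg : HasDerivAt g g' x) (hgx : 0 < g x) :
    HasDerivAt (fun y => posRoot (f y) (g y))
      ((g' - f' * posRoot (f x) (g x)) / √(f x ^ 2 + 4 * g x)) x := by
  have hdisc : 0 < f x ^ 2 + 4 * g x := by positivity
  have hq : 0 < √(f x ^ 2 + 4 * g x) := Real.sqrt_pos.mpr hdisc
  have hsqrt := ((hf.fun_pow 2).fun_add (hg.const_mul 4)).sqrt hdisc.ne'
  refine ((hsqrt.sub hf).div_const 2).congr_deriv ?_
  unfold _root_.posRoot
  field_simp
  ring

end posRoot

lemma hasDerivAt_sq_posRoot_sub {μ xi w ρ : ℝ} (hμ : 0 < μ) (hρ : 0 < ρ) :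
    HasDerivAt (fun x => (posRoot (x * xi - w) (x * μ) - w) ^ 2)
      ((2 / ρ) * (posRoot (ρ * xi - w) (ρ * μ) / √((ρ * xi - w) ^ 2 + 4 * (ρ * μ)))
        * (posRoot (ρ * xi - w) (ρ * μ) - w) ^ 2) ρ := by
  have hq : 0 < √((ρ * xi - w) ^ 2 + 4 * (ρ * μ)) := Real.sqrt_pos.mpr (by positivity)
  have hlin : HasDerivAt (fun x => x * xi - w) xi ρ := by
    simpa using ((hasDerivAt_id ρ).mul_const xi).sub_const w
  have hs := hlin.posRoot (by simpa using (hasDerivAt_id ρ).mul_const μ) (by positivity)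
  have hroot := posRoot_mul_add_self (t := ρ * xi - w) (b := ρ * μ) (by positivity)
  refine ((hs.sub_const w).fun_pow 2).congr_deriv ?_
  generalize posRoot (ρ * xi - w) (ρ * μ) = s at hroot ⊢
  have hkey : ρ * (μ - xi * s) = s * (s - w) := by linear_combination -hroot
  field_simp
  linear_combination 2 * (s - w) * hkey

theorem stmt14 (μ xi w : ℝ) (hμ : 0 < μ)
    (t s z r : ℝ → ℝ)
    (ht : ∀ ρ : ℝ, t ρ = ρ * xi - w)
    (hs : ∀ ρ : ℝ, s ρ = (Real.sqrt (t ρ ^ 2 + 4 * ρ * μ) - t ρ) / 2)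
    (hz : ∀ ρ : ℝ, z ρ = (Real.sqrt (t ρ ^ 2 + 4 * ρ * μ) + t ρ) / 2)
    (hr : ∀ ρ : ℝ, r ρ = s ρ - w) :
    (∀ ρ : ℝ, 0 < ρ →
      HasDerivAt (fun ρ' => r ρ' ^ 2) ((2 / ρ) * (s ρ / (s ρ + z ρ)) * r ρ ^ 2) ρ) ∧
    ((∀ ρ : ℝ, 0 < ρ → r ρ ≠ 0) →
      StrictMonoOn (fun ρ => r ρ ^ 2) (Set.Ioi 0)) := by
  have hs_eq : ∀ ρ, s ρ = posRoot (ρ * xi - w) (ρ * μ) := fun ρ => by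
    rw [hs, ht, posRoot, mul_assoc]
  have hsz : ∀ ρ, s ρ + z ρ = √((ρ * xi - w) ^ 2 + 4 * (ρ * μ)) := fun ρ => by
    rw [← two_mul_posRoot_add, ← hs_eq, hs, hz, ht]
    ring
  have hr_eq : (fun ρ => r ρ ^ 2) = fun ρ => (posRoot (ρ * xi - w) (ρ * μ) - w) ^ 2 := by
    funext ρ
    rw [hr, hs_eq]
  have hderiv : ∀ ρ : ℝ, 0 < ρ →
      HasDerivAt (fun ρ' => r ρ' ^ 2) ((2 / ρ) * (s ρ / (s ρ + z ρ)) * r ρ ^ 2) ρ := by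
    intro ρ hρ
    rw [hr_eq, hsz, hr, hs_eq]
    exact hasDerivAt_sq_posRoot_sub hμ hρ
  refine ⟨hderiv, fun hr0 => strictMonoOn_of_hasDerivWithinAt_pos (convex_Ioi 0)
    (fun ρ hρ => (hderiv ρ hρ).continuousAt.continuousWithinAt)
    (fun ρ hρ => (hderiv ρ (interior_subset hρ)).hasDerivWithinAt) fun ρ hρ => ?_⟩
  have hρ : 0 < ρ := interior_subset hρ
  have hspos : 0 < s ρ := by rw [hs_eq]; exact posRoot_pos (by positivity)
  have hq : 0 < s ρ + z ρ := by rw [hsz]; exact Real.sqrt_pos.mpr (by positivity)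
  have hrρ := hr0 ρ hρ
  positivity
end
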